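/- Let D be a triangulated category with small coproducts, D' a full triangulated subcategory containing a set of generators of D. The map (X, Y, Z) ↦ (X ∩ D', Y ∩ D', Z ∩ D') is a bijection between TTF triples on D that restrict to TTF triples on D' and TTF triples on D' that are restrictions of TTF triples on D. -/

import Mathlib

open CategoryTheory Limits Pretriangulated

universe v u

variable {C : Type u} [Category.{v} C] [Preadditive C] [Limits.HasZeroObject C]
  [HasShift C ℤ] [∀ n : ℤ, (shiftFunctor C n).Additive] [Pretriangulated C]

/-- A t-structure on the full triangulated subcategory `D'` of `C`, given by a pair of
classes of objects `(U, V)` of `D'`.  Taking `D' = Set.univ` gives the notion of a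
t-structure on `C` itself. -/
structure IsTStructureOn (D' U V : Set C) : Prop where
  subU : U ⊆ D'
  subV : V ⊆ D'
  isoU : ∀ ⦃X Y : C⦄, (X ≅ Y) → X ∈ U → Y ∈ D' → Y ∈ U
  isoV : ∀ ⦃X Y : C⦄, (X ≅ Y) → X ∈ V → Y ∈ D' → Y ∈ V
  shiftU : ∀ X ∈ U, X⟦(1 : ℤ)⟧ ∈ U
  shiftV : ∀ X ∈ V, X⟦(-1 : ℤ)⟧ ∈ V
  hom_zero : ∀ ⦃X Y : C⦄, X ∈ U → Y ∈ V → ∀ f : X ⟶ Y, f = 0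
  exists_triangle : ∀ M ∈ D', ∃ (X Y : C) (_ : X ∈ U) (_ : Y ∈ V)
    (f : X ⟶ M) (g : M ⟶ Y) (h : Y ⟶ X⟦(1 : ℤ)⟧), Triangle.mk f g h ∈ (distTriang C)

/-- A strictly full triangulated subcategory, given as a class of objects. -/
structure IsTriangulatedSub (D' : Set C) : Prop where
  iso_mem : ∀ ⦃X Y : C⦄, (X ≅ Y) → X ∈ D' → Y ∈ D'
  zero_mem : ∃ Z ∈ D', IsZero Z
  shift_mem : ∀ X ∈ D', ∀ n : ℤ, X⟦n⟧ ∈ D'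
  ext_mem : ∀ T ∈ (distTriang C), T.obj₁ ∈ D' → T.obj₃ ∈ D' → T.obj₂ ∈ D'

/-- The class of objects right orthogonal to all shifts of objects of `P`. -/
def rightOrthShifts (P : Set C) : Set C :=
  {M | ∀ X ∈ P, ∀ n : ℤ, ∀ f : X⟦n⟧ ⟶ M, f = 0}

/-- The class of objects left orthogonal to all objects of `S`. -/
def leftOrth (S : Set C) : Set C := {M | ∀ Y ∈ S, ∀ f : M ⟶ Y, f = 0}

/-- The class of objects right orthogonal to all objects of `S`. -/
def rightOrth (S : Set C) : Set C := {M | ∀ Y ∈ S, ∀ f : Y ⟶ M, f = 0}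

/-- The set `Q` generates `C`: an object vanishing against all shifts of objects of `Q`
is zero. -/
def GeneratesCat (Q : Set C) : Prop :=
  ∀ M : C, (∀ X ∈ Q, ∀ n : ℤ, ∀ f : X⟦n⟧ ⟶ M, f = 0) → IsZero M


/-- `(X, Y, Z)` is a TTF triple on the full triangulated subcategory `D'`:
both `(X, Y)` and `(Y, Z)` are t-structures on `D'`. -/
def IsTTFOn (D' : Set C) (T : Set C × Set C × Set C) : Prop :=
  IsTStructureOn D' T.1 T.2.1 ∧ IsTStructureOn D' T.2.1 T.2.2

/-- Restriction of a triple of classes of objects to `D'`. -/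
def restrictTriple (D' : Set C) (T : Set C × Set C × Set C) : Set C × Set C × Set C :=
  (T.1 ∩ D', T.2.1 ∩ D', T.2.2 ∩ D')


/-! The classes of a TTF triple `(X, Y, Z)` on `C` are determined by `Y`, as `X = ⊥Y` and
`Z = Y⊥`; so it suffices to recover `Y` from the restriction, namely `Y = (X ∩ D')⊥`.
Given `M ⊥ X ∩ D'`, let `Y' → M → Z' → Y'⟦1⟧` be its `(Y, Z)`-truncation. Then `Z'` is right
orthogonal to `X ∩ D'` (a map to `Z'` from there lifts to `M`) and to `Y ∩ D'`, hence, by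
truncating objects of `D'`, to all of `D'`. As `D'` contains the shifts of a set of generators,
`Z' = 0`, so `M ≅ Y'` lies in `Y`. -/

section

omit [HasZeroObject C] [HasShift C ℤ] [∀ n : ℤ, (shiftFunctor C n).Additive]
  [Pretriangulated C]

lemma mem_leftOrth_iff {S : Set C} {M : C} :
    M ∈ leftOrth S ↔ ObjectProperty.leftOrthogonal (· ∈ S) M :=
  ⟨fun h _ f hY => h _ hY f, fun h _ hY f => h f hY⟩

lemma mem_rightOrth_iff {S : Set C} {M : C} :
    M ∈ rightOrth S ↔ ObjectProperty.rightOrthogonal (· ∈ S) M :=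
  ⟨fun h _ f hX => h _ hX f, fun h _ hX f => h f hX⟩

lemma isZero_of_mem_of_mem_leftOrth {S : Set C} {M : C} (hM : M ∈ S) (hM' : M ∈ leftOrth S) :
    IsZero M :=
  IsZero.iff_id_eq_zero _ |>.2 (hM' M hM (𝟙 M))

lemma isZero_of_mem_of_mem_rightOrth {S : Set C} {M : C} (hM : M ∈ S)
    (hM' : M ∈ rightOrth S) : IsZero M :=
  IsZero.iff_id_eq_zero _ |>.2 (hM' M hM (𝟙 M))

end

lemma leftOrth_ext_mem {S : Set C} (T : Triangle C) (hT : T ∈ distTriang C)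
    (h₁ : T.obj₁ ∈ leftOrth S) (h₃ : T.obj₃ ∈ leftOrth S) : T.obj₂ ∈ leftOrth S :=
  mem_leftOrth_iff.2 <| ObjectProperty.ext_of_isTriangulatedClosed₂ _ T hT
    (mem_leftOrth_iff.1 h₁) (mem_leftOrth_iff.1 h₃)

lemma rightOrth_ext_mem {S : Set C} (T : Triangle C) (hT : T ∈ distTriang C)
    (h₁ : T.obj₁ ∈ rightOrth S) (h₃ : T.obj₃ ∈ rightOrth S) : T.obj₂ ∈ rightOrth S :=
  mem_rightOrth_iff.2 <| ObjectProperty.ext_of_isTriangulatedClosed₂ _ T hT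
    (mem_rightOrth_iff.1 h₁) (mem_rightOrth_iff.1 h₃)

omit [HasZeroObject C] [∀ n : ℤ, (shiftFunctor C n).Additive] [Pretriangulated C] in
lemma GeneratesCat.isZero_of_mem_rightOrth {Q D' : Set C} (hQ : GeneratesCat Q)
    (hQD' : Q ⊆ D') (hD' : ∀ X ∈ D', ∀ n : ℤ, X⟦n⟧ ∈ D') {N : C} (hN : N ∈ rightOrth D') :
    IsZero N :=
  hQ N fun X hX n => hN _ (hD' X (hQD' hX) n)

namespace IsTStructureOn

variable {D' U V : Set C}

lemma subset_leftOrth (h : IsTStructureOn D' U V) : U ⊆ leftOrth V :=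
  fun _ hX _ hY f => h.hom_zero hX hY f

lemma subset_rightOrth (h : IsTStructureOn D' U V) : V ⊆ rightOrth U :=
  fun _ hY _ hX f => h.hom_zero hX hY f

lemma mem_fst_of_isZero_obj₃ (h : IsTStructureOn D' U V) {T : Triangle C}
    (hT : T ∈ distTriang C) (h₁ : T.obj₁ ∈ U) (h₂ : T.obj₂ ∈ D') (h₃ : IsZero T.obj₃) :
    T.obj₂ ∈ U :=
  have := (Triangle.isZero₃_iff_isIso₁ T hT).1 h₃
  h.isoU (asIso T.mor₁) h₁ h₂

lemma mem_snd_of_isZero_obj₁ (h : IsTStructureOn D' U V) {T : Triangle C}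
    (hT : T ∈ distTriang C) (h₁ : IsZero T.obj₁) (h₂ : T.obj₂ ∈ D') (h₃ : T.obj₃ ∈ V) :
    T.obj₂ ∈ V :=
  have := (Triangle.isZero₁_iff_isIso₂ T hT).1 h₁
  h.isoV (asIso T.mor₂).symm h₃ h₂

lemma rightOrth_inter_subset (h : IsTStructureOn D' U V) :
    rightOrth U ∩ rightOrth V ⊆ rightOrth D' := by
  rintro N ⟨hNU, hNV⟩ M hM
  obtain ⟨X, Y, hX, hY, _, _, _, hT⟩ := h.exists_triangle M hM
  have hN : ∀ P ∈ U ∪ V, P ∈ leftOrth {N} := by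
    rintro P (hP | hP) _ rfl φ
    exacts [hNU P hP φ, hNV P hP φ]
  exact leftOrth_ext_mem _ hT (hN X (.inl hX)) (hN Y (.inr hY)) N rfl

lemma eq_leftOrth (h : IsTStructureOn Set.univ U V) : U = leftOrth V := by
  refine h.subset_leftOrth.antisymm fun M hM => ?_
  obtain ⟨X, Y, hX, hY, _, _, _, hT⟩ := h.exists_triangle M trivial
  have hY' : Y ∈ leftOrth V :=
    leftOrth_ext_mem _ (rot_of_distTriang _ hT) hM (h.subset_leftOrth (h.shiftU X hX))
  exact h.mem_fst_of_isZero_obj₃ hT hX trivial (isZero_of_mem_of_mem_leftOrth hY hY')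

lemma eq_rightOrth (h : IsTStructureOn Set.univ U V) : V = rightOrth U := by
  refine h.subset_rightOrth.antisymm fun M hM => ?_
  obtain ⟨X, Y, hX, hY, _, _, _, hT⟩ := h.exists_triangle M trivial
  have hX' : X ∈ rightOrth U :=
    rightOrth_ext_mem _ (inv_rot_of_distTriang _ hT) (h.subset_rightOrth (h.shiftV Y hY)) hM
  exact h.mem_snd_of_isZero_obj₁ hT (isZero_of_mem_of_mem_rightOrth hX hX') trivial hY

end IsTStructureOn

namespace IsTTFOn

variable {T T₁ T₂ : Set C × Set C × Set C}

lemma eq_of_middle_eq (h₁ : IsTTFOn Set.univ T₁) (h₂ : IsTTFOn Set.univ T₂)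
    (hY : T₁.2.1 = T₂.2.1) : T₁ = T₂ :=
  Prod.ext (by rw [h₁.1.eq_leftOrth, h₂.1.eq_leftOrth, hY])
    (Prod.ext hY (by rw [h₁.2.eq_rightOrth, h₂.2.eq_rightOrth, hY]))

lemma middle_eq_rightOrth {D' Q : Set C} (hD' : ∀ X ∈ D', ∀ n : ℤ, X⟦n⟧ ∈ D')
    (hQD' : Q ⊆ D') (hQ : GeneratesCat Q) (hT : IsTTFOn Set.univ T)
    (hres : IsTStructureOn D' (T.1 ∩ D') (T.2.1 ∩ D')) :
    T.2.1 = rightOrth (T.1 ∩ D') := by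
  obtain ⟨hXY, hYZ⟩ := hT
  refine Set.Subset.antisymm (fun M hM P hP => hXY.hom_zero hP.1 hM) fun M hM => ?_
  obtain ⟨Y', Z', hY', hZ', _, _, _, hdist⟩ := hYZ.exists_triangle M trivial
  have hZ'X : Z' ∈ rightOrth (T.1 ∩ D') :=
    rightOrth_ext_mem _ (rot_of_distTriang _ hdist) hM
      fun P hP => hXY.subset_rightOrth (hYZ.shiftU Y' hY') P hP.1
  have hZ'Y : Z' ∈ rightOrth (T.2.1 ∩ D') := fun P hP => hYZ.subset_rightOrth hZ' P hP.1
  have hZ'zero : IsZero Z' :=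
    hQ.isZero_of_mem_rightOrth hQD' hD' (hres.rightOrth_inter_subset ⟨hZ'X, hZ'Y⟩)
  exact hYZ.mem_fst_of_isZero_obj₃ hdist hY' trivial hZ'zero

end IsTTFOn

theorem stmt3_general (D' : Set C) (hD' : IsTriangulatedSub D')
    (Q : Set C) (hQD' : Q ⊆ D') (hQgen : GeneratesCat Q) :
    Set.BijOn (restrictTriple D')
      {T | IsTTFOn Set.univ T ∧ IsTTFOn D' (restrictTriple D' T)}
      {T' | IsTTFOn D' T' ∧ ∃ T, IsTTFOn Set.univ T ∧ restrictTriple D' T = T'} := by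
  refine ⟨fun T hT => ⟨hT.2, T, hT.1, rfl⟩, fun T₁ hT₁ T₂ hT₂ heq => ?_, ?_⟩
  · have hX : T₁.1 ∩ D' = T₂.1 ∩ D' := congrArg Prod.fst heq
    refine hT₁.1.eq_of_middle_eq hT₂.1 ?_
    rw [hT₁.1.middle_eq_rightOrth hD'.shift_mem hQD' hQgen hT₁.2.1,
      hT₂.1.middle_eq_rightOrth hD'.shift_mem hQD' hQgen hT₂.2.1, hX]
  · rintro T' ⟨hT', T, hT, rfl⟩
    exact ⟨T, ⟨hT, hT'⟩, rfl⟩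

/-- **Bijection between lifted and restricted TTF triples.**
Let `C` be a triangulated category with small coproducts and `D'` a full triangulated
subcategory containing a set `Q` of generators of `C`.  Then
`(X, Y, Z) ↦ (X ∩ D', Y ∩ D', Z ∩ D')` is a bijection from the set of TTF triples on `C`
which restrict to TTF triples on `D'` onto the set of TTF triples on `D'` which are
restrictions of TTF triples on `C`. -/
theorem stmt3 [HasCoproducts.{v} C] (D' : Set C) (hD' : IsTriangulatedSub D')
    (Q : Set C) (hQD' : Q ⊆ D') (hQgen : GeneratesCat Q) :
    Set.BijOn (restrictTriple D')
      {T | IsTTFOn Set.univ T ∧ IsTTFOn D' (restrictTriple D' T)}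
      {T' | IsTTFOn D' T' ∧ ∃ T, IsTTFOn Set.univ T ∧ restrictTriple D' T = T'} :=
  stmt3_general D' hD' Q hQD' hQgen
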